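/- arXiv:1709.04274 — 2 statements merged into one kernel-verified Lean document; each statement's English description precedes it below -/
import Mathlib

section
/- Let ρ, q, K ∈ ℝ satisfy |ρq| + |Kq| < 1, and let τ > 0. Then for every δ > 0, all complex roots s of 1 − ρq·e^{−τs} + Kq·e^{−(τ+δ)s} = 0 satisfy Re(s) < 0. -/
open Complex

theorem norm_exp_neg_ofReal_mul_le_one {t : ℝ} (ht : 0 ≤ t) {s : ℂ} (hs : 0 ≤ s.re) :
    ‖exp (-(t : ℂ) * s)‖ ≤ 1 := by
  rw [norm_exp, Real.exp_le_one_iff, neg_mul, neg_re, re_ofReal_mul, neg_nonpos]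
  exact mul_nonneg ht hs

theorem one_sub_mul_add_mul_ne_zero {a b z w : ℂ} (hab : ‖a‖ + ‖b‖ < 1)
    (hz : ‖z‖ ≤ 1) (hw : ‖w‖ ≤ 1) : 1 - a * z + b * w ≠ 0 := by
  intro h
  have hone : (1 : ℂ) = a * z - b * w := by linear_combination h
  have : ‖a * z - b * w‖ ≤ ‖a‖ + ‖b‖ :=
    calc ‖a * z - b * w‖ ≤ ‖a * z‖ + ‖b * w‖ := norm_sub_le _ _
      _ = ‖a‖ * ‖z‖ + ‖b‖ * ‖w‖ := by rw [norm_mul, norm_mul]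
      _ ≤ ‖a‖ + ‖b‖ := add_le_add (mul_le_of_le_one_right (norm_nonneg _) hz)
          (mul_le_of_le_one_right (norm_nonneg _) hw)
  rw [← hone, norm_one] at this
  linarith

theorem modified_controller_delay_robust (ρ q K τ : ℝ) (h : |ρ * q| + |K * q| < 1)
    (hτ : τ > 0) :
    ∀ δ : ℝ, δ > 0 → ∀ s : ℂ,
      1 - (ρ * q : ℂ) * Complex.exp (-(τ : ℂ) * s)
        + (K * q : ℂ) * Complex.exp (-((τ : ℂ) + δ) * s) = 0 → s.re < 0 := by
  intro δ hδ s hroot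
  by_contra! hs
  have hcoeff : ‖(ρ * q : ℂ)‖ + ‖(K * q : ℂ)‖ < 1 := by
    simpa only [← ofReal_mul, norm_real, Real.norm_eq_abs] using h
  have hdelayed : ‖exp (-((τ : ℂ) + δ) * s)‖ ≤ 1 := by
    simpa only [ofReal_add] using norm_exp_neg_ofReal_mul_le_one (by linarith : 0 ≤ τ + δ) hs
  exact one_sub_mul_add_mul_ne_zero hcoeff (norm_exp_neg_ofReal_mul_le_one hτ.le hs)
    hdelayed hroot
end

section
/- Let ρ, q, K ∈ ℝ with |ρq| + |Kq| < 1, let τ > 0, and let N ∈ L¹([0,τ], ℝ). Then there exists δ₀ > 0 such that for all 0 < δ ≤ δ₀, the function F(s) = 1 − ρq·e^{−τs} + Kq·e^{−(τ+δ)s} − ∫₀^τ N(ξ)(e^{−ξs} − e^{−(ξ+δ)s}) dξ satisfies |F(s)| > 0 for all s ∈ ℂ with Re(s) ≥ 0. -/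
/-!
Extend `N` by zero to `M` on `ℝ`. Moving the delay `δ` from the kernel onto `M` turns the integral
term into the Laplace transform of `M - M (· - δ)`, which on `Re s ≥ 0` has modulus at most
`‖M - M (· - δ)‖₁`; by continuity of translation in `L¹` this is below `1 - |ρq| - |Kq|` for
small `δ`, while the two delay terms have modulus at most `|ρq|` and `|Kq|`.
-/

open MeasureTheory Filter Topology

theorem tendsto_integral_norm_comp_add_sub {G E : Type*} [NormedAddCommGroup E] [AddGroup G]
    [TopologicalSpace G] [IsTopologicalAddGroup G] [MeasurableSpace G] [BorelSpace G]
    {μ : Measure G} [IsLocallyFiniteMeasure μ] [μ.InnerRegularCompactLTTop]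
    [μ.IsAddLeftInvariant] {f : G → E} (hf : Integrable f μ) :
    Tendsto (fun c => ∫ x, ‖f (c + x) - f x‖ ∂μ) (𝓝 0) (𝓝 0) := by
  have : Fact ((1 : ENNReal) ≠ ⊤) := ⟨ENNReal.one_ne_top⟩
  have hF : MemLp f 1 μ := memLp_one_iff_integrable.2 hf
  have hcont : Continuous fun c : G => DomAddAct.mk c +ᵥ hF.toLp f :=
    DomAddAct.continuous_mk.vadd continuous_const
  have key := hcont.tendsto 0
  rw [tendsto_iff_norm_sub_tendsto_zero] at key
  refine key.congr fun c => ?_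
  rw [DomAddAct.mk_zero, zero_vadd, DomAddAct.mk_vadd_toLp, ← MemLp.toLp_sub,
    L1.norm_eq_integral_norm]
  refine integral_congr_ae ?_
  filter_upwards [MemLp.coeFn_toLp
    ((hF.comp_measurePreserving (measurePreserving_vadd c μ)).sub hF)] with x hx
  exact congrArg norm hx

theorem exists_pos_integral_abs_sub_comp_sub_lt {f : ℝ → ℝ} (hf : Integrable f) {ε : ℝ}
    (hε : 0 < ε) : ∃ δ₀ > 0, ∀ δ, 0 < δ → δ ≤ δ₀ → ∫ x, |f x - f (x - δ)| < ε := by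
  have hlim : Tendsto (fun δ => ∫ x, |f x - f (x - δ)|) (𝓝[>] 0) (𝓝 0) := by
    have hneg : Tendsto (fun δ : ℝ => -δ) (𝓝[>] 0) (𝓝 0) :=
      (continuous_neg.tendsto' 0 0 neg_zero).mono_left nhdsWithin_le_nhds
    refine ((tendsto_integral_norm_comp_add_sub hf).comp hneg).congr fun δ =>
      integral_congr_ae (ae_of_all _ fun x => ?_)
    simp [Real.norm_eq_abs, abs_sub_comm, neg_add_eq_sub]
  obtain ⟨δ₀, hδ₀, hsub⟩ :=
    mem_nhdsGT_iff_exists_Ioc_subset.1 (hlim.eventually_lt_const hε)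
  exact ⟨δ₀, hδ₀, fun δ hδ hδle => hsub ⟨hδ, hδle⟩⟩

theorem norm_exp_neg_mul_le_one {x : ℝ} {s : ℂ} (hx : 0 ≤ x) (hs : 0 ≤ s.re) :
    ‖Complex.exp (-(x : ℂ) * s)‖ ≤ 1 := by
  rw [Complex.norm_exp, Real.exp_le_one_iff]
  simpa [Complex.mul_re] using mul_nonneg hx hs

theorem norm_ofReal_mul_exp_neg_mul_le (a : ℝ) {x : ℝ} {s : ℂ} (hx : 0 ≤ x) (hs : 0 ≤ s.re) :
    ‖(a : ℂ) * Complex.exp (-(x : ℂ) * s)‖ ≤ |a| := by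
  rw [norm_mul, Complex.norm_real, Real.norm_eq_abs]
  exact mul_le_of_le_one_right (abs_nonneg a) (norm_exp_neg_mul_le_one hx hs)

section Laplace

variable {g : ℝ → ℝ} {s : ℂ}

theorem norm_ofReal_mul_exp_neg_mul_le_abs (hg0 : ∀ ξ < 0, g ξ = 0) (hs : 0 ≤ s.re) (ξ : ℝ) :
    ‖(g ξ : ℂ) * Complex.exp (-(ξ : ℂ) * s)‖ ≤ |g ξ| := by
  rcases lt_or_ge ξ 0 with hξ | hξ
  · simp [hg0 ξ hξ]
  · exact norm_ofReal_mul_exp_neg_mul_le (g ξ) hξ hs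

theorem integrable_ofReal_mul_exp_neg_mul (hg : Integrable g) (hg0 : ∀ ξ < 0, g ξ = 0)
    (hs : 0 ≤ s.re) : Integrable fun ξ : ℝ => (g ξ : ℂ) * Complex.exp (-(ξ : ℂ) * s) :=
  hg.abs.mono' (by fun_prop) (ae_of_all _ (norm_ofReal_mul_exp_neg_mul_le_abs hg0 hs))

theorem norm_integral_ofReal_mul_exp_neg_mul_le (hg : Integrable g) (hg0 : ∀ ξ < 0, g ξ = 0)
    (hs : 0 ≤ s.re) : ‖∫ ξ : ℝ, (g ξ : ℂ) * Complex.exp (-(ξ : ℂ) * s)‖ ≤ ∫ ξ, |g ξ| :=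
  norm_integral_le_of_norm_le hg.abs (ae_of_all _ (norm_ofReal_mul_exp_neg_mul_le_abs hg0 hs))

theorem integral_ofReal_mul_sub_exp_shift (δ : ℝ)
    (hg : Integrable fun ξ : ℝ => (g ξ : ℂ) * Complex.exp (-(ξ : ℂ) * s)) :
    ∫ ξ : ℝ, (g ξ : ℂ) * (Complex.exp (-(ξ : ℂ) * s) - Complex.exp (-((ξ : ℂ) + δ) * s)) =
      ∫ ξ : ℝ, ((g ξ - g (ξ - δ) : ℝ) : ℂ) * Complex.exp (-(ξ : ℂ) * s) := by
  set h : ℝ → ℂ := fun ξ => (g ξ : ℂ) * Complex.exp (-((ξ : ℂ) + δ) * s)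
  have hh : Integrable h := by
    refine (hg.const_mul (Complex.exp (-(δ : ℂ) * s))).congr (ae_of_all _ fun ξ => ?_)
    simp only [h, mul_left_comm _ (g ξ : ℂ), ← Complex.exp_add]
    ring_nf
  calc ∫ ξ : ℝ, (g ξ : ℂ) * (Complex.exp (-(ξ : ℂ) * s) - Complex.exp (-((ξ : ℂ) + δ) * s))
      = (∫ ξ : ℝ, (g ξ : ℂ) * Complex.exp (-(ξ : ℂ) * s)) - ∫ ξ, h ξ := by
        simp only [h, mul_sub]
        exact integral_sub hg hh
    _ = (∫ ξ : ℝ, (g ξ : ℂ) * Complex.exp (-(ξ : ℂ) * s)) - ∫ ξ, h (ξ - δ) := by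
        rw [integral_sub_right_eq_self]
    _ = ∫ ξ : ℝ, ((g ξ - g (ξ - δ) : ℝ) : ℂ) * Complex.exp (-(ξ : ℂ) * s) := by
        rw [← integral_sub hg (hh.comp_sub_right δ)]
        congr 1 with ξ
        simp only [h]
        push_cast
        ring_nf

end Laplace

theorem norm_sub_add_sub_pos {E : Type*} [SeminormedAddCommGroup E] {x a b c : E}
    (h : ‖a‖ + ‖b‖ + ‖c‖ < ‖x‖) : 0 < ‖x - a + b - c‖ := by
  have : ‖x‖ ≤ ‖x - a + b - c‖ + (‖a‖ + ‖b‖ + ‖c‖) :=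
    calc ‖x‖ = ‖(x - a + b - c) + (a - b + c)‖ := by congr 1; abel
      _ ≤ ‖x - a + b - c‖ + ‖a - b + c‖ := norm_add_le _ _
      _ ≤ ‖x - a + b - c‖ + (‖a‖ + ‖b‖ + ‖c‖) := by
        gcongr
        exact (norm_add_le _ _).trans (by gcongr; exact norm_sub_le _ _)
  linarith

theorem closed_loop_delay_robust (ρ q K τ : ℝ) (h : |ρ * q| + |K * q| < 1) (hτ : τ > 0)
    (N : ℝ → ℝ) (hN : IntegrableOn N (Set.Icc 0 τ)) :
    ∃ δ₀ > 0, ∀ δ : ℝ, 0 < δ → δ ≤ δ₀ → ∀ s : ℂ, 0 ≤ s.re →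
      0 < ‖1 - (ρ * q : ℂ) * Complex.exp (-(τ : ℂ) * s)
          + (K * q : ℂ) * Complex.exp (-((τ : ℂ) + δ) * s)
          - ∫ ξ in Set.Icc (0:ℝ) τ,
              (N ξ : ℂ) * (Complex.exp (-(ξ : ℂ) * s) - Complex.exp (-((ξ : ℂ) + δ) * s))‖ := by
  set M := (Set.Icc 0 τ).indicator N
  have hM : Integrable M := (integrable_indicator_iff measurableSet_Icc).2 hN
  have hM0 : ∀ ξ < 0, M ξ = 0 := fun ξ hξ =>
    Set.indicator_of_notMem (fun hmem => hmem.1.not_gt hξ) N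
  obtain ⟨δ₀, hδ₀, hsmall⟩ := exists_pos_integral_abs_sub_comp_sub_lt hM (sub_pos.2 h)
  refine ⟨δ₀, hδ₀, fun δ hδ hδle s hs => norm_sub_add_sub_pos ?_⟩
  have hI : ∫ ξ in Set.Icc (0:ℝ) τ,
        (N ξ : ℂ) * (Complex.exp (-(ξ : ℂ) * s) - Complex.exp (-((ξ : ℂ) + δ) * s)) =
      ∫ ξ : ℝ, ((M ξ - M (ξ - δ) : ℝ) : ℂ) * Complex.exp (-(ξ : ℂ) * s) := by
    rw [← integral_indicator measurableSet_Icc,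
      ← integral_ofReal_mul_sub_exp_shift δ (integrable_ofReal_mul_exp_neg_mul hM hM0 hs)]
    congr 1 with ξ
    by_cases hξ : ξ ∈ Set.Icc 0 τ <;> simp [M, hξ]
  have hA := norm_ofReal_mul_exp_neg_mul_le (ρ * q) hτ.le hs
  have hB := norm_ofReal_mul_exp_neg_mul_le (K * q) (add_pos hτ hδ).le hs
  have hC := norm_integral_ofReal_mul_exp_neg_mul_le (g := fun ξ => M ξ - M (ξ - δ))
    (hM.sub (hM.comp_sub_right δ))
    (fun ξ hξ => by simp [hM0 ξ hξ, hM0 (ξ - δ) (by linarith)]) hs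
  push_cast at hA hB
  rw [hI, norm_one]
  linarith [hsmall δ hδ hδle]
end
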